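/- The inner product bifunctional ⟨·,·⟩ : H_c × H̄_r → ℂ on an infinite-dimensional Hilbert space H is not strongly completely bounded, although it is weakly completely bounded. -/

import Mathlib

/-!
Since `a ⋄ b = (1 ⋄ b) ∘ (a ⋄ 1)`, the weak amplification is `∑ᵢⱼ ⟨xᵢ, yⱼ⟩ vⱼ uᵢ` with
`uᵢ = aᵢ ⋄ 1` and `vⱼ = 1 ⋄ bⱼ`, and `‖∑ uᵢ* uᵢ‖ ≤ ‖∑ aᵢ* aᵢ‖`, `‖∑ vⱼ vⱼ*‖ ≤ ‖∑ bⱼ bⱼ*‖`.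
For a sum with the row operators `vⱼ` to the left of the column operators `uᵢ`, Cauchy–Schwarz
and the fact that the matrix `(⟨xᵢ, yⱼ⟩)` of two orthonormal families is a contraction give
the bound `‖∑ uᵢ* uᵢ‖^{1/2} ‖∑ vⱼ vⱼ*‖^{1/2}`.

The strong amplification `∑ᵢⱼ ⟨xᵢ, yⱼ⟩ aᵢ bⱼ` multiplies in the other order, and this fails:
for partial isometries `qₖ` (`k < n`) with common initial projection `P` and pairwise orthogonal
final projections, `(aₖ, bₖ) = (qₖ*, qₖ)` has `∑ aₖ* aₖ = ∑ bₖ bₖ* = ∑ qₖ qₖ*`, a projection,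
while `∑ₖ aₖ bₖ = n P` has norm `n`.
-/

section

open Finset InnerProductSpace ContinuousLinearMap RCLike

variable {𝕜 E F G H : Type*} [RCLike 𝕜]
  [NormedAddCommGroup E] [InnerProductSpace 𝕜 E] [NormedAddCommGroup F] [InnerProductSpace 𝕜 F]
  [NormedAddCommGroup G] [InnerProductSpace 𝕜 G] [NormedAddCommGroup H] [InnerProductSpace 𝕜 H]
  {ι κ : Type*} [Fintype ι] [Fintype κ]

theorem Orthonormal.norm_sum_smul_sq {v : ι → E} (hv : Orthonormal 𝕜 v) (c : ι → 𝕜) :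
    ‖∑ i, c i • v i‖ ^ 2 = ∑ i, ‖c i‖ ^ 2 := by
  rw [@norm_sq_eq_re_inner 𝕜, hv.inner_sum, map_sum]
  refine sum_congr rfl fun i _ => ?_
  rw [RCLike.conj_mul, ← ofReal_pow, ofReal_re]

theorem Orthonormal.sum_norm_sum_inner_mul_sq_le {x : ι → E} {y : κ → E}
    (hx : Orthonormal 𝕜 x) (hy : Orthonormal 𝕜 y) (c : ι → 𝕜) :
    ∑ j, ‖∑ i, inner 𝕜 (y j) (x i) * c i‖ ^ 2 ≤ ∑ i, ‖c i‖ ^ 2 := by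
  simp_rw [mul_comm _ (c _), ← inner_smul_right, ← inner_sum, ← hx.norm_sum_smul_sq]
  exact hy.sum_inner_products_le _

theorem Orthonormal.sum_norm_sum_inner_smul_sq_le {x : ι → E} {y : κ → E}
    (hx : Orthonormal 𝕜 x) (hy : Orthonormal 𝕜 y) (p : ι → F) :
    ∑ j, ‖∑ i, inner 𝕜 (y j) (x i) • p i‖ ^ 2 ≤ ∑ i, ‖p i‖ ^ 2 := by
  let W := Submodule.span 𝕜 (Set.range p)
  have : FiniteDimensional 𝕜 W := FiniteDimensional.span_of_finite 𝕜 (Set.finite_range p)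
  let b := stdOrthonormalBasis 𝕜 W
  have parseval : ∀ w ∈ W, ‖w‖ ^ 2 = ∑ k, ‖inner 𝕜 (b k : F) w‖ ^ 2 := fun w hw =>
    (b.sum_sq_norm_inner_right ⟨w, hw⟩).symm
  have hp : ∀ i, p i ∈ W := fun i => Submodule.subset_span (Set.mem_range_self i)
  calc ∑ j, ‖∑ i, inner 𝕜 (y j) (x i) • p i‖ ^ 2
      = ∑ j, ∑ k, ‖∑ i, inner 𝕜 (y j) (x i) * inner 𝕜 (b k : F) (p i)‖ ^ 2 := by
        refine sum_congr rfl fun j _ => ?_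
        rw [parseval _ (W.sum_mem fun i _ => W.smul_mem _ (hp i))]
        simp_rw [inner_sum, inner_smul_right]
    _ = ∑ k, ∑ j, ‖∑ i, inner 𝕜 (y j) (x i) * inner 𝕜 (b k : F) (p i)‖ ^ 2 := sum_comm
    _ ≤ ∑ k, ∑ i, ‖inner 𝕜 (b k : F) (p i)‖ ^ 2 := by
        gcongr with k; exact hx.sum_norm_sum_inner_mul_sq_le hy _
    _ = ∑ i, ‖p i‖ ^ 2 := by rw [sum_comm]; simp_rw [← parseval _ (hp _)]

theorem Orthonormal.norm_sum_rankOne_self_le_one {v : ι → E} (hv : Orthonormal 𝕜 v) :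
    ‖∑ i, rankOne 𝕜 (v i) (v i)‖ ≤ 1 := by
  refine opNorm_le_bound _ zero_le_one fun ξ => ?_
  rw [one_mul, ← sq_le_sq₀ (norm_nonneg _) (norm_nonneg _), _root_.sum_apply]
  simp_rw [rankOne_apply, hv.norm_sum_smul_sq]
  exact hv.sum_inner_products_le ξ

theorem Orthonormal.sum_sum_inner_smul {M : Type*} [AddCommMonoid M] [Module 𝕜 M]
    {e : ι → E} (he : Orthonormal 𝕜 e) (c : ι → ι → M) :
    ∑ i, ∑ j, inner 𝕜 (e j) (e i) • c i j = ∑ i, c i i := by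
  classical
  simp [orthonormal_iff_ite.mp he, ite_smul]

theorem isCompactOperator_rankOne (x : F) (y : E) : IsCompactOperator (rankOne 𝕜 x y) :=
  (isCompactOperator_of_locallyCompactSpace_rng (toSpanSingleton 𝕜 x)).comp_clm (innerSL 𝕜 y)

section Complete

variable [CompleteSpace E] [CompleteSpace F] [CompleteSpace G]

theorem ContinuousLinearMap.sum_norm_apply_sq_le (c : ι → E →L[𝕜] F) (ξ : E) :
    ∑ i, ‖c i ξ‖ ^ 2 ≤ ‖∑ i, adjoint (c i) ∘L c i‖ * ‖ξ‖ ^ 2 := by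
  set A := ∑ i, adjoint (c i) ∘L c i
  have hA : ∑ i, ‖c i ξ‖ ^ 2 = re (inner 𝕜 ξ (A ξ)) := by
    simp_rw [apply_norm_sq_eq_inner_adjoint_right, ← map_sum, ← inner_sum, A, _root_.sum_apply]
  calc ∑ i, ‖c i ξ‖ ^ 2 = re (inner 𝕜 ξ (A ξ)) := hA
    _ ≤ ‖ξ‖ * ‖A ξ‖ := (re_le_norm _).trans (norm_inner_le_norm _ _)
    _ ≤ ‖ξ‖ * (‖A‖ * ‖ξ‖) := by gcongr; exact A.le_opNorm ξ
    _ = ‖A‖ * ‖ξ‖ ^ 2 := by ring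

theorem norm_sum_sum_inner_smul_comp_le (u : ι → E →L[𝕜] F) (v : κ → F →L[𝕜] G)
    {x : ι → H} {y : κ → H} (hx : Orthonormal 𝕜 x) (hy : Orthonormal 𝕜 y) :
    ‖∑ i, ∑ j, inner 𝕜 (y j) (x i) • (v j ∘L u i)‖ ≤
      √‖∑ i, adjoint (u i) ∘L u i‖ * √‖∑ j, v j ∘L adjoint (v j)‖ := by
  refine opNorm_le_of_re_inner_le (by positivity) fun ξ η hξ hη => ?_
  set s : κ → F := fun j => ∑ i, inner 𝕜 (y j) (x i) • u i ξ
  have hinner : inner 𝕜 ((∑ i, ∑ j, inner 𝕜 (y j) (x i) • (v j ∘L u i)) ξ) η =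
      ∑ j, inner 𝕜 (s j) (adjoint (v j) η) := by
    simp_rw [s, _root_.sum_apply, sum_inner, smul_apply, inner_smul_left, comp_apply,
      ← adjoint_inner_right (v _)]
    exact sum_comm
  have hs : ∑ j, ‖s j‖ ^ 2 ≤ ‖∑ i, adjoint (u i) ∘L u i‖ := by
    simpa [hξ] using (hx.sum_norm_sum_inner_smul_sq_le hy (fun i => u i ξ)).trans
      (sum_norm_apply_sq_le u ξ)
  have hv : ∑ j, ‖adjoint (v j) η‖ ^ 2 ≤ ‖∑ j, v j ∘L adjoint (v j)‖ := by
    simpa [hη] using sum_norm_apply_sq_le (fun j => adjoint (v j)) η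
  calc re (inner 𝕜 _ η) ≤ ‖∑ j, inner 𝕜 (s j) (adjoint (v j) η)‖ := hinner ▸ re_le_norm _
    _ ≤ ∑ j, ‖s j‖ * ‖adjoint (v j) η‖ :=
        (norm_sum_le _ _).trans (sum_le_sum fun j _ => norm_inner_le_norm _ _)
    _ ≤ √(∑ j, ‖s j‖ ^ 2) * √(∑ j, ‖adjoint (v j) η‖ ^ 2) := Real.sum_mul_le_sqrt_mul_sqrt _ _ _
    _ ≤ _ := by gcongr

theorem exists_orthonormal_fin_of_not_finiteDimensional
    (hE : ¬ FiniteDimensional 𝕜 E) (n : ℕ) : ∃ e : Fin n → E, Orthonormal 𝕜 e := by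
  obtain ⟨w, b, -⟩ := exists_hilbertBasis 𝕜 E
  have : Infinite w := by
    by_contra hw
    have : Fintype w := @Fintype.ofFinite _ (not_infinite_iff_finite.mp hw)
    exact hE (b.toOrthonormalBasis.toBasis.finiteDimensional_of_finite)
  let emb : Fin n ↪ w := Fin.valEmbedding.trans (Infinite.natEmbedding w)
  exact ⟨b ∘ emb, b.orthonormal.comp _ emb.injective⟩

end Complete

theorem norm_sum_sum_inner_smul_diamond_le {L : Type*} [NormedAddCommGroup L]
    [InnerProductSpace 𝕜 L] [CompleteSpace L] (d : (L →L[𝕜] L) → (L →L[𝕜] L) → (L →L[𝕜] L))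
    (hd_addl : ∀ a a' b, d (a + a') b = d a b + d a' b)
    (hd_addr : ∀ a b b', d a (b + b') = d a b + d a b')
    (hd_mul : ∀ a b a' b', d a b ∘L d a' b' = d (a ∘L a') (b ∘L b'))
    (hd_star : ∀ a b, adjoint (d a b) = d (adjoint a) (adjoint b))
    (hd_norm : ∀ a b, ‖d a b‖ = ‖a‖ * ‖b‖)
    (a : ι → L →L[𝕜] L) (b : κ → L →L[𝕜] L)
    {x : ι → H} {y : κ → H} (hx : Orthonormal 𝕜 x) (hy : Orthonormal 𝕜 y) :
    ‖∑ i, ∑ j, inner 𝕜 (y j) (x i) • d (a i) (b j)‖ ≤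
      √‖∑ i, adjoint (a i) ∘L a i‖ * √‖∑ j, b j ∘L adjoint (b j)‖ := by
  have hsplit : ∀ i j, d (a i) (b j) = d 1 (b j) ∘L d (a i) 1 := by
    simp only [hd_mul, one_def, id_comp, comp_id, implies_true]
  have hcol : ∑ i, adjoint (d (a i) 1) ∘L d (a i) 1 = d (∑ i, adjoint (a i) ∘L a i) 1 := by
    simp only [hd_star, adjoint_one, hd_mul, ← ContinuousLinearMap.mul_def, one_mul]
    exact (map_sum (AddMonoidHom.mk' (d · 1) (hd_addl · · 1)) _ _).symm
  have hrow : ∑ j, d 1 (b j) ∘L adjoint (d 1 (b j)) = d 1 (∑ j, b j ∘L adjoint (b j)) := by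
    simp only [hd_star, adjoint_one, hd_mul, ← ContinuousLinearMap.mul_def, one_mul]
    exact (map_sum (AddMonoidHom.mk' (d 1) (hd_addr 1)) _ _).symm
  have hone : ‖(1 : L →L[𝕜] L)‖ ≤ 1 := norm_id_le
  simp_rw [hsplit]
  refine (norm_sum_sum_inner_smul_comp_le _ _ hx hy).trans ?_
  rw [hcol, hrow, hd_norm, hd_norm]
  exact mul_le_mul (Real.sqrt_le_sqrt (mul_le_of_le_one_right (norm_nonneg _) hone))
    (Real.sqrt_le_sqrt (mul_le_of_le_one_left (norm_nonneg _) hone))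
    (Real.sqrt_nonneg _) (Real.sqrt_nonneg _)

theorem exists_norm_sum_sum_inner_smul_comp_eq_card {L : Type*} [NormedAddCommGroup L]
    [InnerProductSpace 𝕜 L] [CompleteSpace L] [CompleteSpace H]
    (hL : ¬ FiniteDimensional 𝕜 L) (hH : ¬ FiniteDimensional 𝕜 H) (n : ℕ) :
    ∃ (a b : Fin n → L →L[𝕜] L) (x : Fin n → H),
      (∀ i, IsCompactOperator (a i)) ∧ (∀ j, IsCompactOperator (b j)) ∧ Orthonormal 𝕜 x ∧
      ‖∑ i, ∑ j, inner 𝕜 (x j) (x i) • (a i ∘L b j)‖ = n ∧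
      ‖∑ i, adjoint (a i) ∘L a i‖ ≤ 1 ∧ ‖∑ j, b j ∘L adjoint (b j)‖ ≤ 1 := by
  obtain ⟨e, he⟩ := exists_orthonormal_fin_of_not_finiteDimensional hH n
  obtain ⟨f, hf⟩ := exists_orthonormal_fin_of_not_finiteDimensional hL (n + 1)
  have hf_succ : Orthonormal 𝕜 (f ∘ Fin.succ) := hf.comp _ (Fin.succ_injective n)
  have hf_inner : ∀ k, inner 𝕜 (f k) (f k) = (1 : 𝕜) := fun k => by
    rw [inner_self_eq_norm_sq_to_K, hf.norm_eq_one, ofReal_one, one_pow]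
  let q : Fin n → L →L[𝕜] L := fun k => rankOne 𝕜 (f k.succ) (f 0)
  have hq_initial : ∀ k, adjoint (q k) ∘L q k = rankOne 𝕜 (f 0) (f 0) := fun k => by
    simp only [q, adjoint_rankOne, rankOne_comp_rankOne, hf_inner, one_smul]
  have hq_final : ∀ k, q k ∘L adjoint (q k) = rankOne 𝕜 (f k.succ) (f k.succ) := fun k => by
    simp only [q, adjoint_rankOne, rankOne_comp_rankOne, hf_inner, one_smul]
  refine ⟨fun i => adjoint (q i), q, e, fun i => ?_, fun j => isCompactOperator_rankOne _ _, he,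
    ?_, ?_, ?_⟩
  · simpa [q] using isCompactOperator_rankOne (𝕜 := 𝕜) (f 0) (f i.succ)
  · rw [he.sum_sum_inner_smul (fun i j => adjoint (q i) ∘L q j)]
    simp only [hq_initial, sum_const, card_univ, Fintype.card_fin]
    rw [← Nat.cast_smul_eq_nsmul 𝕜, norm_smul, norm_rankOne, hf.norm_eq_one, RCLike.norm_natCast]
    ring
  · simpa [hq_final] using hf_succ.norm_sum_rankOne_self_le_one
  · simpa [hq_final] using hf_succ.norm_sum_rankOne_self_le_one

end

open ContinuousLinearMap in
/-- An element `u = Σᵢ aᵢ ⊗ xᵢ` of `KH_c` (resp. `v = Σⱼ bⱼ ⊗ yⱼ` of `KH̄_r`) is given by compact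
coefficients and orthonormal vectors, with `‖u‖_c = ‖Σᵢ aᵢ* aᵢ‖^{1/2}` and
`‖v‖_r = ‖Σⱼ bⱼ bⱼ*‖^{1/2}`; `d a b` is `a ⋄ b = ι*(a ⊗̇ b)ι`, and `⟨x, y⟩` is Mathlib's `⟪y, x⟫`. -/
theorem inner_product_wcb_not_scb_general
    {L : Type*} [NormedAddCommGroup L] [InnerProductSpace ℂ L] [CompleteSpace L]
    {H : Type*} [NormedAddCommGroup H] [InnerProductSpace ℂ H] [CompleteSpace H]
    (hL : ¬ FiniteDimensional ℂ L) (hH : ¬ FiniteDimensional ℂ H)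
    -- the operation `⋄` and its properties
    (d : (L →L[ℂ] L) → (L →L[ℂ] L) → (L →L[ℂ] L))
    (hd_addl : ∀ a a' b, d (a + a') b = d a b + d a' b)
    (hd_addr : ∀ a b b', d a (b + b') = d a b + d a b')
    (hd_mul : ∀ a b a' b', d a b ∘L d a' b' = d (a ∘L a') (b ∘L b'))
    (hd_star : ∀ a b, adjoint (d a b) = d (adjoint a) (adjoint b))
    (hd_norm : ∀ a b, ‖d a b‖ = ‖a‖ * ‖b‖) :
    -- the inner product bifunctional is weakly completely contractive …
    (∀ (n m : ℕ) (a : Fin n → (L →L[ℂ] L)) (b : Fin m → (L →L[ℂ] L))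
      (x : Fin n → H) (y : Fin m → H),
      (∀ i, IsCompactOperator (a i)) → (∀ j, IsCompactOperator (b j)) →
      Orthonormal ℂ x → Orthonormal ℂ y →
      ‖∑ i, ∑ j, (inner ℂ (y j) (x i) : ℂ) • d (a i) (b j)‖ ≤
        Real.sqrt ‖∑ i, adjoint (a i) ∘L a i‖ *
          Real.sqrt ‖∑ j, b j ∘L adjoint (b j)‖) ∧
    -- … but it is not strongly completely bounded
    ¬ ∃ C : ℝ, ∀ (n m : ℕ) (a : Fin n → (L →L[ℂ] L)) (b : Fin m → (L →L[ℂ] L))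
      (x : Fin n → H) (y : Fin m → H),
      (∀ i, IsCompactOperator (a i)) → (∀ j, IsCompactOperator (b j)) →
      Orthonormal ℂ x → Orthonormal ℂ y →
      ‖∑ i, ∑ j, (inner ℂ (y j) (x i) : ℂ) • (a i ∘L b j)‖ ≤
        C * Real.sqrt ‖∑ i, adjoint (a i) ∘L a i‖ *
          Real.sqrt ‖∑ j, b j ∘L adjoint (b j)‖ := by
  refine ⟨fun n m a b x y _ _ hx hy =>
    norm_sum_sum_inner_smul_diamond_le d hd_addl hd_addr hd_mul hd_star hd_norm a b hx hy, ?_⟩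
  rintro ⟨C, hC⟩
  obtain ⟨a, b, x, ha, hb, hx, hnorm, hcol, hrow⟩ :=
    exists_norm_sum_sum_inner_smul_comp_eq_card hL hH (⌊|C|⌋₊ + 1)
  have hbound := hC _ _ a b x x ha hb hx hx
  rw [hnorm, mul_assoc] at hbound
  have hsqrt : Real.sqrt ‖∑ i, adjoint (a i) ∘L a i‖ * Real.sqrt ‖∑ j, b j ∘L adjoint (b j)‖ ≤ 1 :=
    mul_le_one₀ (Real.sqrt_le_one.mpr hcol) (Real.sqrt_nonneg _) (Real.sqrt_le_one.mpr hrow)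
  have hC_abs : C * (Real.sqrt ‖∑ i, adjoint (a i) ∘L a i‖ *
      Real.sqrt ‖∑ j, b j ∘L adjoint (b j)‖) ≤ |C| :=
    (mul_le_mul_of_nonneg_right (le_abs_self C) (by positivity)).trans
      (mul_le_of_le_one_right (abs_nonneg C) hsqrt)
  have := Nat.lt_floor_add_one |C|
  push_cast at hbound
  linarith

open ContinuousLinearMap in
/-- The inner-product bifunctional `⟨·,·⟩ : H_c × H̄_r → ℂ` (`H` infinite-dimensional)
is weakly completely bounded (with `‖⟨·,·⟩‖_wcb = 1`) but not strongly completely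
bounded.  Elements of `KH_c` and `KH̄_r` are written `u = Σᵢ aᵢ ⊗ xᵢ`,
`v = Σⱼ bⱼ ⊗ yⱼ` with compact coefficients and orthonormal vectors; the quantum
norms are `‖u‖_c = ‖Σᵢ aᵢ* aᵢ‖^{1/2}` and `‖v‖_r = ‖Σⱼ bⱼ bⱼ*‖^{1/2}`.  The
operation `a ⋄ b = ι*(a ⊗̇ b)ι` on `B(L)` (`ι : L → L ⊗̇ L` a fixed unitary) is
axiomatized by the identities (3) of the paper: biadditivity, homogeneity,
multiplicativity, compatibility with adjoints, `‖a ⋄ b‖ = ‖a‖ ‖b‖`, and the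
existence of the flip unitary `Δ` with `Δ (a ⋄ b) Δ* = b ⋄ a`.  The strong
amplification sends `(u, v)` to `Σᵢⱼ ⟨xᵢ, yⱼ⟩ aᵢ bⱼ`, the weak amplification to
`Σᵢⱼ ⟨xᵢ, yⱼ⟩ aᵢ ⋄ bⱼ`, and `⟨x, y⟩` denotes the inner product of `H`, linear
in `x` and conjugate-linear in `y` (Mathlib's `⟪y, x⟫`). -/
theorem inner_product_wcb_not_scb
    {L : Type*} [NormedAddCommGroup L] [InnerProductSpace ℂ L] [CompleteSpace L]
    {H : Type*} [NormedAddCommGroup H] [InnerProductSpace ℂ H] [CompleteSpace H]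
    (hL : ¬ FiniteDimensional ℂ L) (hH : ¬ FiniteDimensional ℂ H)
    -- the operation `⋄` and its properties
    (d : (L →L[ℂ] L) → (L →L[ℂ] L) → (L →L[ℂ] L))
    (hd_addl : ∀ a a' b, d (a + a') b = d a b + d a' b)
    (hd_addr : ∀ a b b', d a (b + b') = d a b + d a b')
    (hd_smull : ∀ (c : ℂ) a b, d (c • a) b = c • d a b)
    (hd_smulr : ∀ (c : ℂ) a b, d a (c • b) = c • d a b)
    (hd_mul : ∀ a b a' b', d a b ∘L d a' b' = d (a ∘L a') (b ∘L b'))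
    (hd_star : ∀ a b, adjoint (d a b) = d (adjoint a) (adjoint b))
    (hd_norm : ∀ a b, ‖d a b‖ = ‖a‖ * ‖b‖)
    (Δ : L →L[ℂ] L) (hΔ₁ : adjoint Δ ∘L Δ = 1) (hΔ₂ : Δ ∘L adjoint Δ = 1)
    (hflip : ∀ a b, Δ ∘L d a b ∘L adjoint Δ = d b a) :
    -- the inner product bifunctional is weakly completely contractive …
    (∀ (n m : ℕ) (a : Fin n → (L →L[ℂ] L)) (b : Fin m → (L →L[ℂ] L))
      (x : Fin n → H) (y : Fin m → H),
      (∀ i, IsCompactOperator (a i)) → (∀ j, IsCompactOperator (b j)) →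
      Orthonormal ℂ x → Orthonormal ℂ y →
      ‖∑ i, ∑ j, (inner ℂ (y j) (x i) : ℂ) • d (a i) (b j)‖ ≤
        Real.sqrt ‖∑ i, adjoint (a i) ∘L a i‖ *
          Real.sqrt ‖∑ j, b j ∘L adjoint (b j)‖) ∧
    -- … but it is not strongly completely bounded
    ¬ ∃ C : ℝ, ∀ (n m : ℕ) (a : Fin n → (L →L[ℂ] L)) (b : Fin m → (L →L[ℂ] L))
      (x : Fin n → H) (y : Fin m → H),
      (∀ i, IsCompactOperator (a i)) → (∀ j, IsCompactOperator (b j)) →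
      Orthonormal ℂ x → Orthonormal ℂ y →
      ‖∑ i, ∑ j, (inner ℂ (y j) (x i) : ℂ) • (a i ∘L b j)‖ ≤
        C * Real.sqrt ‖∑ i, adjoint (a i) ∘L a i‖ *
          Real.sqrt ‖∑ j, b j ∘L adjoint (b j)‖ :=
  inner_product_wcb_not_scb_general hL hH d hd_addl hd_addr hd_mul hd_star hd_norm
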